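/- arXiv:1302.6659 — 2 statements merged into one kernel-verified Lean document; each statement's English description precedes it below -/
import Mathlib

section
/- Let y be an integer with 1 ≤ y ≤ n, let v ∈ (0,1], and let c ∈ (0,1). If θ_R, θ_CP ∈ (0,1) satisfy (1−v)(1 − F_{θ_R}(y−1)) + v (1 − F_{θ_R}(y)) = c and 1 − F_{θ_CP}(y−1) = c, then θ_R > θ_CP. (The lower endpoint of the randomized confidence interval is strictly larger than the Clopper–Pearson lower endpoint.) -/
/-- The Binomial(n, θ) probability mass function `f_θ(y) = C(n,y) θ^y (1-θ)^(n-y)`. -/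
noncomputable def binomP (n : ℕ) (θ : ℝ) (y : ℕ) : ℝ :=
  (n.choose y : ℝ) * θ ^ y * (1 - θ) ^ (n - y)

/-- `F_θ(y-1) = ∑_{j=0}^{y-1} f_θ(j)`, with the convention `F_θ(-1) = 0`. -/
noncomputable def binomCDFpred (n : ℕ) (θ : ℝ) (y : ℕ) : ℝ :=
  ∑ j ∈ Finset.range y, binomP n θ j

/-- The Binomial(n, θ) cumulative distribution function `F_θ(y) = ∑_{j=0}^{y} f_θ(j)`. -/
noncomputable def binomCDF (n : ℕ) (θ : ℝ) (y : ℕ) : ℝ :=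
  ∑ j ∈ Finset.range (y + 1), binomP n θ j

/-!
The lower tail `F_θ(y-1)` is a sum of Bernstein polynomials whose derivative telescopes to
`-n f^{(n-1)}_θ(y-1) < 0`, so it is strictly decreasing in `θ`. The defining equation of `θ_R`
says `1 - F_{θ_R}(y-1) = c + v f_{θ_R}(y) > c = 1 - F_{θ_CP}(y-1)`, hence `θ_R > θ_CP`.
-/

open Polynomial

theorem bernsteinPolynomial.derivative_sum_range_succ (R : Type*) [CommRing R] (n k : ℕ) :
    derivative (∑ j ∈ Finset.range (k + 1), bernsteinPolynomial R n j) =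
      -n * bernsteinPolynomial R (n - 1) k := by
  induction k with
  | zero => simp [bernsteinPolynomial.derivative_zero]
  | succ k ih =>
    rw [Finset.sum_range_succ, derivative_add, ih, bernsteinPolynomial.derivative_succ]
    ring

theorem binomP_eq_eval_bernsteinPolynomial (n : ℕ) (θ : ℝ) (y : ℕ) :
    binomP n θ y = (bernsteinPolynomial ℝ n y).eval θ := by
  simp [binomP, bernsteinPolynomial]

theorem binomP_pos {n y : ℕ} (hyn : y ≤ n) {θ : ℝ} (hθ : θ ∈ Set.Ioo (0 : ℝ) 1) :
    0 < binomP n θ y := by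
  have hchoose : (0 : ℝ) < n.choose y := by exact_mod_cast Nat.choose_pos hyn
  exact mul_pos (mul_pos hchoose (pow_pos hθ.1 y)) (pow_pos (sub_pos.2 hθ.2) (n - y))

theorem binomCDF_eq_binomCDFpred_add (n : ℕ) (θ : ℝ) (y : ℕ) :
    binomCDF n θ y = binomCDFpred n θ y + binomP n θ y :=
  Finset.sum_range_succ _ _

theorem hasDerivAt_binomCDFpred_succ (n k : ℕ) (θ : ℝ) :
    HasDerivAt (fun t => binomCDFpred n t (k + 1)) (-n * binomP (n - 1) θ k) θ := by
  have hpoly := (∑ j ∈ Finset.range (k + 1), bernsteinPolynomial ℝ n j).hasDerivAt θ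
  simpa only [binomCDFpred, bernsteinPolynomial.derivative_sum_range_succ, eval_mul, eval_neg,
    eval_natCast, eval_finsetSum, ← binomP_eq_eval_bernsteinPolynomial] using hpoly

theorem binomCDFpred_strictAntiOn {n y : ℕ} (hy : 1 ≤ y) (hyn : y ≤ n) :
    StrictAntiOn (fun θ => binomCDFpred n θ y) (Set.Icc 0 1) := by
  obtain ⟨k, rfl⟩ : ∃ k, y = k + 1 := ⟨y - 1, by omega⟩
  have hderiv := hasDerivAt_binomCDFpred_succ n k
  refine strictAntiOn_of_deriv_neg (convex_Icc 0 1)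
    (HasDerivAt.continuousOn fun θ _ => hderiv θ) fun θ hθ => ?_
  rw [interior_Icc] at hθ
  have hn : (0 : ℝ) < n := by exact_mod_cast (by omega : 0 < n)
  rw [(hderiv θ).deriv, neg_mul]
  exact neg_neg_of_pos (mul_pos hn (binomP_pos (by omega) hθ))

theorem stmt_9_general (n : ℕ) (y : ℕ) (hy1 : 1 ≤ y) (hyn : y ≤ n)
    (v : ℝ) (hv : v ∈ Set.Ioc (0 : ℝ) 1) (c : ℝ)
    (θR θCP : ℝ) (hθR : θR ∈ Set.Ioo (0 : ℝ) 1) (hθCP : θCP ∈ Set.Ioo (0 : ℝ) 1)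
    (hR : (1 - v) * (1 - binomCDFpred n θR y) + v * (1 - binomCDF n θR y) = c)
    (hCP : 1 - binomCDFpred n θCP y = c) :
    θR > θCP := by
  have hjump : 0 < v * binomP n θR y := mul_pos hv.1 (binomP_pos hyn hθR)
  have htail : binomCDFpred n θR y < binomCDFpred n θCP y := by
    rw [binomCDF_eq_binomCDFpred_add] at hR
    linarith
  exact (binomCDFpred_strictAntiOn hy1 hyn).lt_iff_gt (Set.Ioo_subset_Icc_self hθR)
    (Set.Ioo_subset_Icc_self hθCP) |>.1 htail

/-- For `1 ≤ y ≤ n`, `v ∈ (0,1]`, `c ∈ (0,1)`: if `θ_R, θ_CP ∈ (0,1)` satisfy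
`(1-v)(1 - F_{θ_R}(y-1)) + v(1 - F_{θ_R}(y)) = c` and `1 - F_{θ_CP}(y-1) = c`, then
`θ_R > θ_CP` (the randomized lower endpoint is strictly larger than the Clopper–Pearson
one). -/
theorem stmt_9 (n : ℕ) (hn : 1 ≤ n) (y : ℕ) (hy1 : 1 ≤ y) (hyn : y ≤ n)
    (v : ℝ) (hv : v ∈ Set.Ioc (0 : ℝ) 1) (c : ℝ) (hc : c ∈ Set.Ioo (0 : ℝ) 1)
    (θR θCP : ℝ) (hθR : θR ∈ Set.Ioo (0 : ℝ) 1) (hθCP : θCP ∈ Set.Ioo (0 : ℝ) 1)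
    (hR : (1 - v) * (1 - binomCDFpred n θR y) + v * (1 - binomCDF n θR y) = c)
    (hCP : 1 - binomCDFpred n θCP y = c) :
    θR > θCP :=
  stmt_9_general n y hy1 hyn v hv c θR θCP hθR hθCP hR hCP
end

section
/- Let θ ∈ (0,1), α ∈ (0,1), let N ≥ 1 be an integer, and let Y₁, Y₂, … be independent and identically Binomial(n,θ) distributed random variables on a probability space. Let w₁, w₂, … be a deterministic sequence in (0,1] that is periodic with period N and such that (w₁, …, w_N) is a permutation of (1/N, 2/N, …, N/N). Then, almost surely, (1/m) Σ_{k=1}^{m} 𝟙[w_k·f_θ(Y_k) + F_θ(Y_k − 1) ≤ α/2] converges as m → ∞ to the limit L = (1/N) Σ_{j=1}^{N} Σ_{y=0}^{n} f_θ(y)·𝟙[(j/N)·f_θ(y) + F_θ(y−1) ≤ α/2], and this limit satisfies L ≤ α/2. -/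
/-!
On each residue class modulo `N` the weight `w` is constant, so the strong law of large numbers
gives the limit of the averages along that class; since the partial sums are monotone, the full
averages converge to the mean of these `N` limits, and the permutation turns that mean into `L`.

`L` is the probability that the randomized p-value `U f_θ(Y) + F_θ(Y - 1)`, with `U` uniform on
`{1/N, …, N/N}`, is at most `α/2`. Let `y` be the largest value that can give this event and
`j/N` the largest admissible `U` for it: the event has probability at most
`F_θ(y - 1) + (j/N) f_θ(y) ≤ α/2`.
-/

open MeasureTheory ProbabilityTheory Filter

open Finset Topology

lemma binomP_nonneg {θ : ℝ} (hθ₀ : 0 ≤ θ) (hθ₁ : θ ≤ 1) (n y : ℕ) :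
    0 ≤ binomP n θ y := by
  have : 0 ≤ 1 - θ := by linarith
  unfold binomP
  positivity

lemma binomP_eq_zero_of_lt {n y : ℕ} (θ : ℝ) (h : n < y) : binomP n θ y = 0 := by
  simp [binomP, Nat.choose_eq_zero_of_lt h]

section Validity

variable {f : ℕ → ℝ} {t : ℝ}

lemma sum_mul_le_min_of_mul_add_partialSum_le (hf : ∀ y, 0 ≤ f y) (ht : 0 ≤ t)
    {q : ℕ → ℝ} (hq₁ : ∀ y, q y ≤ 1)
    (hq : ∀ y, q y = 0 ∨ q y * f y + ∑ i ∈ range y, f i ≤ t) (M : ℕ) :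
    ∑ y ∈ range M, f y * q y ≤ min (∑ y ∈ range M, f y) t := by
  induction M with
  | zero => simpa using ht
  | succ M ih =>
    rw [sum_range_succ, sum_range_succ]
    rcases hq M with h0 | hle
    · rw [h0, mul_zero, add_zero]
      exact ih.trans (min_le_min_right _ (le_add_of_nonneg_right (hf M)))
    · have hM : f M * q M ≤ f M := mul_le_of_le_one_right (hf M) (hq₁ M)
      have ih' := ih.trans (min_le_left _ _)
      exact le_min (by linarith) (by linarith)

lemma card_filter_eq_zero_or_div_mul_add_le {a : ℝ} (ha : 0 ≤ a) (b t : ℝ) (N : ℕ) :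
    #{j ∈ Icc 1 N | ((j : ℕ) : ℝ) / N * a + b ≤ t} = 0 ∨
      (#{j ∈ Icc 1 N | ((j : ℕ) : ℝ) / N * a + b ≤ t} : ℝ) / N * a + b ≤ t := by
  set S := {j ∈ Icc 1 N | ((j : ℕ) : ℝ) / N * a + b ≤ t}
  rcases S.eq_empty_or_nonempty with hS | hS
  · exact .inl (card_eq_zero.mpr hS)
  refine .inr ?_
  have hmax := (mem_filter.mp (S.max'_mem hS)).2
  have hcard : #S ≤ S.max' hS := by
    calc #S ≤ #(Icc 1 (S.max' hS)) := card_le_card fun j hj =>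
          mem_Icc.mpr ⟨(mem_Icc.mp (mem_filter.mp hj).1).1, S.le_max' j hj⟩
      _ = S.max' hS := by simp
  calc (#S : ℝ) / N * a + b ≤ (S.max' hS : ℝ) / N * a + b := by gcongr
    _ ≤ t := hmax

/-- The left side is `P(U f(Y) + F(Y - 1) ≤ t)` for `Y` with mass function `f` and an
independent `U` uniform on `{1/N, …, N/N}`. -/
lemma sum_Icc_sum_mul_indicator_le (hf : ∀ y, 0 ≤ f y) (ht : 0 ≤ t) (N M : ℕ) :
    (1 / N : ℝ) * ∑ j ∈ Icc 1 N, ∑ y ∈ range M,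
      f y * (if (j : ℝ) / N * f y + ∑ i ∈ range y, f i ≤ t then (1 : ℝ) else 0) ≤ t := by
  set k : ℕ → ℕ := fun y =>
    #{j ∈ Icc 1 N | ((j : ℕ) : ℝ) / N * f y + ∑ i ∈ range y, f i ≤ t}
  have hk : ∀ y, (k y : ℝ) ≤ N := fun y => by
    exact_mod_cast (card_filter_le _ _).trans (by simp)
  have hsum : (1 / N : ℝ) * ∑ j ∈ Icc 1 N, ∑ y ∈ range M,
      f y * (if (j : ℝ) / N * f y + ∑ i ∈ range y, f i ≤ t then (1 : ℝ) else 0)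
      = ∑ y ∈ range M, f y * ((k y : ℝ) / N) := by
    rw [sum_comm, mul_sum]
    refine sum_congr rfl fun y _ => ?_
    rw [← mul_sum, sum_boole]
    simp only [k]
    ring
  rw [hsum]
  refine (sum_mul_le_min_of_mul_add_partialSum_le hf ht
    (fun y => div_le_one_of_le₀ (hk y) (Nat.cast_nonneg N)) (fun y => ?_) M).trans
    (min_le_right _ _)
  rcases card_filter_eq_zero_or_div_mul_add_le (hf y) (∑ i ∈ range y, f i) t N with h | h
  · exact .inl (by simp [k, h])
  · exact .inr h

end Validity

lemma sum_range_mul_eq_sum_sum {M : Type*} [AddCommMonoid M] (h : ℕ → M) (N q : ℕ) :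
    ∑ k ∈ range (q * N), h k = ∑ r ∈ range N, ∑ j ∈ range q, h (j * N + r) := by
  rw [sum_comm]
  induction q with
  | zero => simp
  | succ q ih => rw [Nat.succ_mul, sum_range_add, ih, sum_range_succ]

lemma tendsto_average_of_tendsto_average_residues {h : ℕ → ℝ} (h0 : ∀ k, 0 ≤ h k) {N : ℕ}
    (hN : 0 < N) {p : ℕ → ℝ}
    (hp : ∀ r < N, Tendsto (fun q : ℕ => (q : ℝ)⁻¹ * ∑ j ∈ range q, h (j * N + r)) atTop
      (𝓝 (p r))) :
    Tendsto (fun m : ℕ => (m : ℝ)⁻¹ * ∑ k ∈ range m, h k) atTop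
      (𝓝 ((N : ℝ)⁻¹ * ∑ r ∈ range N, p r)) := by
  have hmono : Monotone fun m => ∑ k ∈ range m, h k :=
    monotone_nat_of_le_succ fun m => by simpa [sum_range_succ] using h0 m
  have hsub : Tendsto (fun q : ℕ => (∑ k ∈ range (q * N), h k) / (q * N : ℕ)) atTop
      (𝓝 ((N : ℝ)⁻¹ * ∑ r ∈ range N, p r)) := by
    refine ((tendsto_finsetSum (range N) fun r hr => hp r (mem_range.mp hr)).const_mul
      (N : ℝ)⁻¹).congr fun q => ?_
    simp only [sum_range_mul_eq_sum_sum, ← mul_sum, Nat.cast_mul, div_eq_mul_inv, mul_inv]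
    ring
  have hratio : ∀ a : ℝ, 1 < a →
      ∀ᶠ q : ℕ in atTop, (((q + 1) * N : ℕ) : ℝ) ≤ a * (q * N : ℕ) := by
    intro a ha
    filter_upwards [tendsto_natCast_atTop_atTop.eventually_ge_atTop (a - 1)⁻¹] with q hq
    have : 1 ≤ (a - 1) * q := (inv_le_iff_one_le_mul₀' (sub_pos.2 ha)).1 hq
    push_cast
    nlinarith [(Nat.cast_pos.2 hN : (0 : ℝ) < N)]
  simpa only [div_eq_inv_mul] using tendsto_div_of_monotone_of_exists_subseq_tendsto_div _ _
    hmono fun a ha => ⟨fun q => q * N, hratio a ha, tendsto_id.atTop_mul_const' hN, hsub⟩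

lemma sum_perm_add_one_eq_sum_Icc {M : Type*} [AddCommMonoid M] {N : ℕ}
    (σ : Equiv.Perm (Fin N)) (v : ℕ → M) : ∑ r : Fin N, v (σ r + 1) = ∑ j ∈ Icc 1 N, v j := by
  rw [Equiv.sum_comp σ (fun i : Fin N => v (i + 1)),
    Fin.sum_univ_eq_sum_range (fun i => v (i + 1)), range_eq_Ico, sum_Ico_add',
    ← Ico_add_one_right_eq_Icc, zero_add]

section StrongLaw

variable {Ω : Type*} [MeasurableSpace Ω] {P : Measure Ω}

lemma identDistrib_of_measure_eq {β : Type*} [MeasurableSpace β] [Countable β]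
    [MeasurableSingletonClass β] {X Z : Ω → β} (hX : Measurable X) (hZ : Measurable Z)
    (h : ∀ y, P {ω | X ω = y} = P {ω | Z ω = y}) : IdentDistrib X Z P P where
  aemeasurable_fst := hX.aemeasurable
  aemeasurable_snd := hZ.aemeasurable
  map_eq := Measure.ext_of_singleton fun y => by
    rw [Measure.map_apply hX (measurableSet_singleton y),
      Measure.map_apply hZ (measurableSet_singleton y)]
    exact h y

lemma integral_comp_eq_sum_of_measure_eq [IsFiniteMeasure P] {Z : Ω → ℕ} (hZ : Measurable Z)
    {p : ℕ → ℝ} (hp : ∀ y, 0 ≤ p y) {s : Finset ℕ} (hps : ∀ y ∉ s, p y = 0)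
    (hlaw : ∀ y, P {ω | Z ω = y} = ENNReal.ofReal (p y)) {g : ℕ → ℝ} {C : ℝ}
    (hg : ∀ y, ‖g y‖ ≤ C) :
    ∫ ω, g (Z ω) ∂P = ∑ y ∈ s, p y * g y := by
  have hmap : ∀ y, (P.map Z).real {y} = p y := fun y => by
    rw [measureReal_def, Measure.map_apply hZ (measurableSet_singleton y)]
    exact (congrArg ENNReal.toReal (hlaw y)).trans (ENNReal.toReal_ofReal (hp y))
  rw [← integral_map hZ.aemeasurable measurable_from_nat.aestronglyMeasurable,
    integral_countable (Integrable.of_bound measurable_from_nat.aestronglyMeasurable C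
      (ae_of_all _ hg)), tsum_eq_sum (s := s) fun y hy => by simp [hmap, hps y hy]]
  simp [hmap]

lemma ae_tendsto_average_comp_of_injective [IsProbabilityMeasure P] {β : Type*}
    [MeasurableSpace β] {Y : ℕ → Ω → β} (hindep : iIndepFun Y P)
    (hident : ∀ k, IdentDistrib (Y k) (Y 0) P P) {g : β → ℝ} (hg : Measurable g)
    (hint : Integrable (fun ω => g (Y 0 ω)) P) {φ : ℕ → ℕ} (hφ : φ.Injective) :
    ∀ᵐ ω ∂P, Tendsto (fun q : ℕ => (q : ℝ)⁻¹ * ∑ j ∈ range q, g (Y (φ j) ω)) atTop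
      (𝓝 (∫ ω, g (Y 0 ω) ∂P)) := by
  have hφ0 := (hident (φ 0)).comp hg
  have hlaw := strong_law_ae (fun j => g ∘ Y (φ j)) (hφ0.integrable_iff.mpr hint)
    (fun i j hij => (hindep.indepFun (hφ.ne hij)).comp hg hg)
    (fun j => ((hident (φ j)).trans (hident (φ 0)).symm).comp hg)
  rw [hφ0.integral_eq] at hlaw
  simpa using hlaw

end StrongLaw

theorem stmt_18_general (n : ℕ) (θ α : ℝ) (hθ : θ ∈ Set.Ioo (0 : ℝ) 1)
    (hα : α ∈ Set.Ioo (0 : ℝ) 1) (N : ℕ) (hN : 1 ≤ N)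
    {Ω : Type*} [MeasurableSpace Ω] (P : Measure Ω) [IsProbabilityMeasure P]
    (Y : ℕ → Ω → ℕ)
    (hmeas : ∀ k, Measurable (Y k))
    (hindep : iIndepFun Y P)
    (hdist : ∀ k, ∀ y : ℕ, P {ω | Y k ω = y} = ENNReal.ofReal (binomP n θ y))
    (w : ℕ → ℝ)
    (hper : ∀ k, w (k + N) = w k)
    (hperm : ∃ σ : Equiv.Perm (Fin N), ∀ j : Fin N, w (j : ℕ) = (((σ j : ℕ) + 1 : ℝ)) / N) :
    (∀ᵐ ω ∂P,
      Tendsto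
        (fun m : ℕ => (1 / m : ℝ) * ∑ k ∈ Finset.range m,
          (if w k * binomP n θ (Y k ω) + binomCDFpred n θ (Y k ω) ≤ α / 2
            then (1 : ℝ) else 0))
        atTop
        (nhds ((1 / N : ℝ) * ∑ j ∈ Finset.Icc 1 N, ∑ y ∈ Finset.range (n + 1),
          binomP n θ y *
            (if (j : ℝ) / N * binomP n θ y + binomCDFpred n θ y ≤ α / 2
              then (1 : ℝ) else 0)))) ∧
    (1 / N : ℝ) * ∑ j ∈ Finset.Icc 1 N, ∑ y ∈ Finset.range (n + 1),
        binomP n θ y *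
          (if (j : ℝ) / N * binomP n θ y + binomCDFpred n θ y ≤ α / 2
            then (1 : ℝ) else 0) ≤ α / 2 := by
  obtain ⟨σ, hσ⟩ := hperm
  have hf := binomP_nonneg hθ.1.le hθ.2.le n
  set g : ℝ → ℕ → ℝ := fun c y =>
    if c * binomP n θ y + binomCDFpred n θ y ≤ α / 2 then 1 else 0
  have hg₀ : ∀ c y, 0 ≤ g c y := fun c y => by simp only [g]; split_ifs <;> norm_num
  have hg₁ : ∀ c y, ‖g c y‖ ≤ 1 := fun c y => by simp only [g]; split_ifs <;> norm_num
  set p : ℝ → ℝ := fun c => ∑ y ∈ range (n + 1), binomP n θ y * g c y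
  have hmean : ∀ c, ∫ ω, g c (Y 0 ω) ∂P = p c := fun c =>
    integral_comp_eq_sum_of_measure_eq (hmeas 0) hf
      (fun y hy => binomP_eq_zero_of_lt θ (by simpa using hy)) (hdist 0) (hg₁ c)
  have hident : ∀ k, IdentDistrib (Y k) (Y 0) P P := fun k =>
    identDistrib_of_measure_eq (hmeas k) (hmeas 0) fun y => by rw [hdist, hdist]
  have hint : ∀ c, Integrable (fun ω => g c (Y 0 ω)) P := fun c =>
    .of_bound ((measurable_from_nat (f := g c)).comp (hmeas 0)).aestronglyMeasurable 1
      (ae_of_all _ fun _ => hg₁ _ _)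
  have hresidue : ∀ r, ∀ᵐ ω ∂P, Tendsto
      (fun q : ℕ => (q : ℝ)⁻¹ * ∑ j ∈ range q, g (w r) (Y (j * N + r) ω)) atTop
      (𝓝 (p (w r))) := fun r =>
    hmean (w r) ▸ ae_tendsto_average_comp_of_injective hindep hident measurable_from_nat
      (hint (w r)) (φ := fun j => j * N + r)
      fun i j hij => Nat.eq_of_mul_eq_mul_right hN (by simpa using hij)
  have hlimit : ∑ r ∈ range N, p (w r) = ∑ j ∈ Icc 1 N, p (j / N) := by
    rw [← Fin.sum_univ_eq_sum_range, ← sum_perm_add_one_eq_sum_Icc σ]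
    simp [hσ]
  refine ⟨?_, sum_Icc_sum_mul_indicator_le hf (by linarith [hα.1]) N (n + 1)⟩
  filter_upwards [ae_all_iff.2 hresidue] with ω hω
  have hwper : ∀ r j, w (j * N + r) = w r := fun r j => by
    simpa [add_comm] using (Function.Periodic.nat_mul hper j) r
  have := tendsto_average_of_tendsto_average_residues (h := fun k => g (w k) (Y k ω))
    (fun k => hg₀ _ _) hN fun r _ => by simpa only [hwper] using hω r
  simpa only [one_div, hlimit] using this

/-- If `Y₁, Y₂, …` are iid Binomial(n,θ) and `w₁, w₂, …` is a deterministic sequence in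
`(0,1]`, periodic with period `N`, one period being a permutation of `1/N, 2/N, …, N/N`,
then almost surely the long-run proportion of indices `k` with
`w_k f_θ(Y_k) + F_θ(Y_k - 1) ≤ α/2` converges to
`L = (1/N) ∑_{j=1}^{N} ∑_{y=0}^{n} f_θ(y) 𝟙[(j/N) f_θ(y) + F_θ(y-1) ≤ α/2]`,
and `L ≤ α/2`. -/
theorem stmt_18 (n : ℕ) (hn : 1 ≤ n) (θ α : ℝ) (hθ : θ ∈ Set.Ioo (0 : ℝ) 1)
    (hα : α ∈ Set.Ioo (0 : ℝ) 1) (N : ℕ) (hN : 1 ≤ N)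
    {Ω : Type*} [MeasurableSpace Ω] (P : Measure Ω) [IsProbabilityMeasure P]
    (Y : ℕ → Ω → ℕ)
    (hmeas : ∀ k, Measurable (Y k))
    (hindep : iIndepFun Y P)
    (hdist : ∀ k, ∀ y : ℕ, P {ω | Y k ω = y} = ENNReal.ofReal (binomP n θ y))
    (w : ℕ → ℝ) (hw : ∀ k, w k ∈ Set.Ioc (0 : ℝ) 1)
    (hper : ∀ k, w (k + N) = w k)
    (hperm : ∃ σ : Equiv.Perm (Fin N), ∀ j : Fin N, w (j : ℕ) = (((σ j : ℕ) + 1 : ℝ)) / N) :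
    (∀ᵐ ω ∂P,
      Tendsto
        (fun m : ℕ => (1 / m : ℝ) * ∑ k ∈ Finset.range m,
          (if w k * binomP n θ (Y k ω) + binomCDFpred n θ (Y k ω) ≤ α / 2
            then (1 : ℝ) else 0))
        atTop
        (nhds ((1 / N : ℝ) * ∑ j ∈ Finset.Icc 1 N, ∑ y ∈ Finset.range (n + 1),
          binomP n θ y *
            (if (j : ℝ) / N * binomP n θ y + binomCDFpred n θ y ≤ α / 2
              then (1 : ℝ) else 0)))) ∧
    (1 / N : ℝ) * ∑ j ∈ Finset.Icc 1 N, ∑ y ∈ Finset.range (n + 1),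
        binomP n θ y *
          (if (j : ℝ) / N * binomP n θ y + binomCDFpred n θ y ≤ α / 2
            then (1 : ℝ) else 0) ≤ α / 2 :=
  stmt_18_general n θ α hθ hα N hN P Y hmeas hindep hdist w hper hperm
end
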